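/- arXiv:0808.1619 — 2 statements merged into one kernel-verified Lean document; each statement's English description precedes it below -/
import Mathlib

section
/- Set f0 := y−1, f1 := y, f2 := x, f3 := y+w²−t, f4 := z. For each i ∈ {0,1,2,3,4}, if αi = 0 then fi is an invariant divisor of the A7^(2) system: the total derivative of fi along the Hamiltonian vector field, namely ∂fi/∂t + (∂H/∂y)(∂fi/∂x) − (∂H/∂x)(∂fi/∂y) + (∂H/∂w)(∂fi/∂z) − (∂H/∂z)(∂fi/∂w), is divisible by fi in the polynomial ring ℂ(t)[x,y,z,w]. In particular, the zero locus of fi is preserved by the flow of the A7^(2) system when αi = 0. -/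
/- STATEMENT 1: invariant divisors of the A7^(2) system.  For each i, if αi = 0
then the total derivative of fi along the Hamiltonian vector field is divisible
by fi.  Divisibility in ℂ(t)[x,y,z,w] is formalized as the existence of a
cofactor g with D fi = fi * g pointwise (for all t ∉ {0,1} and all x,y,z,w);
since fi is irreducible and the total derivative is polynomial in x,y,z,w with
coefficients rational in t, this is equivalent to divisibility in the polynomial
ring.  In particular the zero locus of fi is preserved by the flow. -/

open Complex

noncomputable def HA7 (a0 a1 a2 a3 a4 : ℂ) (t x y z w : ℂ) : ℂ :=
  (x^2*y^3 - ((t+1)*x + 2*a2 + a3 + a4)*x*y^2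
    + (t*x^2 + (a0 + 2*a2 + a3 + a4 - (a0+a1)*t)*x + a2*(a2+a3+a4))*y
    + a1*t*x
    + (1/4) * (-(z^2*w^4) + 2*a4*z*w^3 + ((2*t-1)*z^2 - a4^2)*w^2
        - 2*(-a0 - 2*a2 - a3 - a4 + (a4+1)*t)*z*w - t*(t-1)*z^2)
    + y*((y-1)*x - a2)*z*w) / (t*(t-1))

noncomputable def pdX (H : ℂ → ℂ → ℂ → ℂ → ℂ → ℂ) (t x y z w : ℂ) : ℂ :=
  deriv (fun s => H t s y z w) x

noncomputable def pdY (H : ℂ → ℂ → ℂ → ℂ → ℂ → ℂ) (t x y z w : ℂ) : ℂ :=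
  deriv (fun s => H t x s z w) y

noncomputable def pdZ (H : ℂ → ℂ → ℂ → ℂ → ℂ → ℂ) (t x y z w : ℂ) : ℂ :=
  deriv (fun s => H t x y s w) z

noncomputable def pdW (H : ℂ → ℂ → ℂ → ℂ → ℂ → ℂ) (t x y z w : ℂ) : ℂ :=
  deriv (fun s => H t x y z s) w

noncomputable def pdT (f : ℂ → ℂ → ℂ → ℂ → ℂ → ℂ) (t x y z w : ℂ) : ℂ :=
  deriv (fun s => f s x y z w) t

/-- Total derivative of `f` along the Hamiltonian vector field of `H`:
`∂f/∂t + (∂H/∂y)(∂f/∂x) − (∂H/∂x)(∂f/∂y) + (∂H/∂w)(∂f/∂z) − (∂H/∂z)(∂f/∂w)`. -/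
noncomputable def totalDeriv (H f : ℂ → ℂ → ℂ → ℂ → ℂ → ℂ) (t x y z w : ℂ) : ℂ :=
  pdT f t x y z w
  + pdY H t x y z w * pdX f t x y z w
  - pdX H t x y z w * pdY f t x y z w
  + pdW H t x y z w * pdZ f t x y z w
  - pdZ H t x y z w * pdW f t x y z w

/-!
Each `fᵢ` is monic of degree one in one of the variables (`y`, `y`, `x`, `y`, `z`), so its total
derivative `D fᵢ` is divisible by `fᵢ` as soon as it vanishes on the hypersurface `fᵢ = 0`, with
cofactor `D fᵢ / fᵢ`. For `f₀, f₁` the total derivative is `-∂H/∂x`, for `f₂` it is `∂H/∂y`, for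
`f₄` it is `∂H/∂w`, and for `f₃` it is `-1 - ∂H/∂x - 2w ∂H/∂z`; restricted to `fᵢ = 0`, these
vanish identically once `αᵢ = 0` (for `f₃` only after using `α₀ + α₁ + 2α₂ + α₄ = 1`).
-/

theorem exists_eq_mul_of_eq_zero_imp {K : Type*} [CommGroupWithZero K]
    {D f : K → K → K → K → K → K}
    (h : ∀ t x y z w, t ≠ 0 → t ≠ 1 → f t x y z w = 0 → D t x y z w = 0) :
    ∃ g : K → K → K → K → K → K, ∀ t x y z w, t ≠ 0 → t ≠ 1 →
      D t x y z w = f t x y z w * g t x y z w :=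
  ⟨fun t x y z w => D t x y z w / f t x y z w, fun t x y z w ht ht1 =>
    (mul_div_cancel_of_imp' (h t x y z w ht ht1)).symm⟩

section TotalDeriv

variable (H : ℂ → ℂ → ℂ → ℂ → ℂ → ℂ) (φ : ℂ → ℂ) (t x y z w : ℂ)

theorem totalDeriv_fun_x :
    totalDeriv H (fun _ x _ _ _ => φ x) t x y z w = pdY H t x y z w * deriv φ x := by
  simp [totalDeriv, pdT, pdX, pdY, pdZ, pdW]

theorem totalDeriv_fun_y :
    totalDeriv H (fun _ _ y _ _ => φ y) t x y z w = -pdX H t x y z w * deriv φ y := by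
  simp [totalDeriv, pdT, pdX, pdY, pdZ, pdW]

theorem totalDeriv_fun_z :
    totalDeriv H (fun _ _ _ z _ => φ z) t x y z w = pdW H t x y z w * deriv φ z := by
  simp [totalDeriv, pdT, pdX, pdY, pdZ, pdW]

theorem totalDeriv_y_add_sq_sub :
    totalDeriv H (fun t _ y _ w => y + w^2 - t) t x y z w =
      -1 - pdX H t x y z w - 2 * w * pdZ H t x y z w := by
  simp [totalDeriv, pdT, pdX, pdY, pdZ, pdW, mul_comm]

end TotalDeriv

section HA7

variable (a0 a1 a2 a3 a4 t x y z w : ℂ)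

theorem pdX_HA7 : pdX (HA7 a0 a1 a2 a3 a4) t x y z w =
    (2*x*y^3 - 2*(t+1)*x*y^2 - (2*a2+a3+a4)*y^2 + 2*t*x*y + (a0+2*a2+a3+a4-(a0+a1)*t)*y
      + a1*t + y*(y-1)*z*w) / (t*(t-1)) := by
  unfold pdX HA7
  simp (disch := fun_prop) only [deriv_div_const, deriv_fun_add, deriv_fun_sub, deriv_fun_mul,
    deriv.fun_neg, deriv_const, deriv_id'', deriv_fun_pow, deriv_const_mul_id]
  ring

theorem pdY_HA7 : pdY (HA7 a0 a1 a2 a3 a4) t x y z w =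
    (3*x^2*y^2 - 2*((t+1)*x + 2*a2+a3+a4)*x*y + t*x^2 + (a0+2*a2+a3+a4-(a0+a1)*t)*x
      + a2*(a2+a3+a4) + ((2*y-1)*x - a2)*z*w) / (t*(t-1)) := by
  unfold pdY HA7
  simp (disch := fun_prop) only [deriv_div_const, deriv_fun_add, deriv_fun_sub, deriv_fun_mul,
    deriv.fun_neg, deriv_const, deriv_id'', deriv_fun_pow, deriv_const_mul_id]
  ring

theorem pdZ_HA7 : pdZ (HA7 a0 a1 a2 a3 a4) t x y z w =
    ((-z*w^4 + a4*w^3 + (2*t-1)*z*w^2 + (a0+2*a2+a3+a4-(a4+1)*t)*w - t*(t-1)*z) / 2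
      + y*((y-1)*x - a2)*w) / (t*(t-1)) := by
  unfold pdZ HA7
  simp (disch := fun_prop) only [deriv_div_const, deriv_fun_add, deriv_fun_sub, deriv_fun_mul,
    deriv.fun_neg, deriv_const, deriv_id'', deriv_fun_pow, deriv_const_mul_id]
  ring

theorem pdW_HA7 : pdW (HA7 a0 a1 a2 a3 a4) t x y z w =
    ((-2*z^2*w^3 + 3*a4*z*w^2 + ((2*t-1)*z^2 - a4^2)*w + (a0+2*a2+a3+a4-(a4+1)*t)*z) / 2
      + y*((y-1)*x - a2)*z) / (t*(t-1)) := by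
  unfold pdW HA7
  simp (disch := fun_prop) only [deriv_div_const, deriv_fun_add, deriv_fun_sub, deriv_fun_mul,
    deriv.fun_neg, deriv_const, deriv_id'', deriv_fun_pow, deriv_const_mul_id]
  ring

theorem totalDeriv_HA7_y_sub_one_eq_zero :
    totalDeriv (HA7 0 a1 a2 a3 a4) (fun _ _ y _ _ => y - 1) t x 1 z w = 0 := by
  rw [totalDeriv_fun_y (φ := fun y => y - 1), pdX_HA7]
  ring

theorem totalDeriv_HA7_y_eq_zero :
    totalDeriv (HA7 a0 0 a2 a3 a4) (fun _ _ y _ _ => y) t x 0 z w = 0 := by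
  rw [totalDeriv_fun_y (φ := fun y => y), pdX_HA7]
  ring

theorem totalDeriv_HA7_x_eq_zero :
    totalDeriv (HA7 a0 a1 0 a3 a4) (fun _ x _ _ _ => x) t 0 y z w = 0 := by
  rw [totalDeriv_fun_x (φ := fun x => x), pdY_HA7]
  ring

theorem totalDeriv_HA7_z_eq_zero :
    totalDeriv (HA7 a0 a1 a2 a3 0) (fun _ _ _ z _ => z) t x y 0 w = 0 := by
  rw [totalDeriv_fun_z (φ := fun z => z), pdW_HA7]
  ring

end HA7

theorem totalDeriv_HA7_y_add_sq_sub_eq_zero {a0 a1 a2 a4 t : ℂ}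
    (hrel : a0 + a1 + 2*a2 + a4 = 1) (ht : t ≠ 0) (ht1 : t ≠ 1) (x z w : ℂ) :
    totalDeriv (HA7 a0 a1 a2 0 a4) (fun t _ y _ w => y + w^2 - t) t x (t - w^2) z w = 0 := by
  rw [totalDeriv_y_add_sq_sub, pdX_HA7, pdZ_HA7]
  have : t - 1 ≠ 0 := sub_ne_zero.mpr ht1
  field_simp
  linear_combination t * (t - 1 - w^2) * hrel

theorem invariant_divisors_A7 (a0 a1 a2 a3 a4 : ℂ)
    (hrel : a0 + a1 + 2*a2 + 2*a3 + a4 = 1) :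
    -- f0 = y - 1
    (a0 = 0 → ∃ g : ℂ → ℂ → ℂ → ℂ → ℂ → ℂ, ∀ t x y z w : ℂ, t ≠ 0 → t ≠ 1 →
      totalDeriv (HA7 a0 a1 a2 a3 a4) (fun _ _ y _ _ => y - 1) t x y z w
        = (y - 1) * g t x y z w) ∧
    -- f1 = y
    (a1 = 0 → ∃ g : ℂ → ℂ → ℂ → ℂ → ℂ → ℂ, ∀ t x y z w : ℂ, t ≠ 0 → t ≠ 1 →
      totalDeriv (HA7 a0 a1 a2 a3 a4) (fun _ _ y _ _ => y) t x y z w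
        = y * g t x y z w) ∧
    -- f2 = x
    (a2 = 0 → ∃ g : ℂ → ℂ → ℂ → ℂ → ℂ → ℂ, ∀ t x y z w : ℂ, t ≠ 0 → t ≠ 1 →
      totalDeriv (HA7 a0 a1 a2 a3 a4) (fun _ x _ _ _ => x) t x y z w
        = x * g t x y z w) ∧
    -- f3 = y + w² - t
    (a3 = 0 → ∃ g : ℂ → ℂ → ℂ → ℂ → ℂ → ℂ, ∀ t x y z w : ℂ, t ≠ 0 → t ≠ 1 →
      totalDeriv (HA7 a0 a1 a2 a3 a4) (fun t _ y _ w => y + w^2 - t) t x y z w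
        = (y + w^2 - t) * g t x y z w) ∧
    -- f4 = z
    (a4 = 0 → ∃ g : ℂ → ℂ → ℂ → ℂ → ℂ → ℂ, ∀ t x y z w : ℂ, t ≠ 0 → t ≠ 1 →
      totalDeriv (HA7 a0 a1 a2 a3 a4) (fun _ _ _ z _ => z) t x y z w
        = z * g t x y z w) := by
  refine ⟨?_, ?_, ?_, ?_, ?_⟩ <;> rintro rfl <;>
    refine exists_eq_mul_of_eq_zero_imp fun t x y z w ht ht1 hf => ?_
  · obtain rfl : y = 1 := sub_eq_zero.mp hf
    exact totalDeriv_HA7_y_sub_one_eq_zero ..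
  · subst hf
    exact totalDeriv_HA7_y_eq_zero ..
  · subst hf
    exact totalDeriv_HA7_x_eq_zero ..
  · obtain rfl : y = t - w^2 := by linear_combination hf
    exact totalDeriv_HA7_y_add_sq_sub_eq_zero (by linear_combination hrel) ht ht1 x z w
  · subst hf
    exact totalDeriv_HA7_z_eq_zero ..
end

section
/- Make the change of parameters α0 = 1/ε + A0, α1 = −1/ε, α2 = A1, α3 = A2, α4 = A3, and the change of variables t = T/ε, x = εX, y = Y/ε, z = √ε·Z, w = W/√ε, in the A7^(2) Hamiltonian H_{A7}; since this change of variables is symplectic and dt = dT/ε, the transformed system is Hamiltonian with Hamiltonian H_ε(X,Y,Z,W,T) := (1/ε)·H_{A7}(εX, Y/ε, √ε·Z, W/√ε, T/ε; 1/ε+A0, −1/ε, A1, A2, A3). Then as ε → 0 this system tends to the C3^(1) system: for every (X,Y,Z,W,T) with T ≠ 0, the four partial derivatives ∂H_ε/∂Y, ∂H_ε/∂X, ∂H_ε/∂W, ∂H_ε/∂Z converge as ε → 0 to the corresponding partial derivatives of the C3^(1) Hamiltonian H_{C3}(X,Y,Z,W,T; A0,A1,A2,A3), where A0+2A1+2A2+A3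 = 1. -/
/-
Only s² = ε enters once s = ε^(1/2) is substituted: the numerator of H_{A7} becomes M/ε, with M a
polynomial in ε, T, X, Y, Z, W, and its denominator t(t - 1) becomes T(T - ε)/ε², so that for ε ≠ 0
the Hamiltonian Hε equals M/(T(T - ε)). This rational function is regular at ε = 0 as soon as T ≠ 0,
and its value there is H_{C3}. A partial derivative of a function that is C¹ jointly in (ε, u)
depends continuously on ε, which gives the four limits.
-/

open Complex Filter Topology

noncomputable def HC3 (a0 a1 a2 a3 : ℂ) (t x y z w : ℂ) : ℂ :=
  (x^2*y^3 - (t*x + 2*a1 + a2 + a3)*x*y^2 - ((a0*t - 1)*x - a1*(a1+a2+a3))*y - t*x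
    - z^2*w^4/4 + (a3/2)*z*w^3 + (1/4)*(2*t*z^2 - a3^2)*w^2
    - (1/2)*((a3+1)*t - 1)*z*w - t^2*z^2/4
    + (x*y - a1)*y*z*w) / t^2

/-- The Hamiltonian of the A7^(2) system after the confluence substitution. -/
noncomputable def Heps (A0 A1 A2 A3 : ℂ) (ε T X Y Z W : ℂ) : ℂ :=
  (1/ε) * HA7 (1/ε + A0) (-(1/ε)) A1 A2 A3
    (T/ε) (ε*X) (Y/ε) (ε ^ ((1:ℂ)/2) * Z) (W / ε ^ ((1:ℂ)/2))

noncomputable def HepsExt (A0 A1 A2 A3 ε T X Y Z W : ℂ) : ℂ :=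
  (X^2*Y^3 - ((T+ε)*X + 2*A1+A2+A3)*X*Y^2
    + (ε*T*X^2 + (1 - A0*T + ε*(A0+2*A1+A2+A3))*X + A1*(A1+A2+A3))*Y - T*X
    + (1/4)*(-(Z^2*W^4) + 2*A3*Z*W^3 + ((2*T-ε)*Z^2 - A3^2)*W^2
      - 2*((A3+1)*T - 1 - ε*(A0+2*A1+A2+A3))*Z*W - T*(T-ε)*Z^2)
    + Y*((Y-ε)*X - A1)*Z*W) / (T*(T-ε))

theorem Heps_eq_HepsExt {A0 A1 A2 A3 ε : ℂ} (hε : ε ≠ 0) :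
    Heps A0 A1 A2 A3 ε = HepsExt A0 A1 A2 A3 ε := by
  ext T X Y Z W
  obtain ⟨s, hs, hsq, hsε⟩ : ∃ s : ℂ, s ≠ 0 ∧ s ^ 2 = ε ∧ ε ^ ((1:ℂ)/2) = s :=
    ⟨_, by simpa [cpow_eq_zero_iff] using hε, by simp, rfl⟩
  rw [Heps, hsε, ← hsq, HA7, HepsExt]
  field_simp
  ring

theorem HC3_eq_HepsExt_zero (A0 A1 A2 A3 : ℂ) : HC3 A0 A1 A2 A3 = HepsExt A0 A1 A2 A3 0 := by
  ext T X Y Z W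
  rw [HC3, HepsExt]
  ring

section PartialDeriv

variable {𝕜 E F : Type*} [NontriviallyNormedField 𝕜] [NormedAddCommGroup E] [NormedSpace 𝕜 E]
  [NormedAddCommGroup F] [NormedSpace 𝕜 F]

theorem continuousAt_deriv_of_contDiffAt_uncurry {f : E → 𝕜 → F} {a : E} {y : 𝕜}
    (hf : ContDiffAt 𝕜 1 (Function.uncurry f) (a, y)) :
    ContinuousAt (fun x => deriv (f x) y) a :=
  (hf.fderiv (m := 0) contDiffAt_const (by norm_num)).continuousAt.clm_apply continuousAt_const

theorem tendsto_deriv_of_eventuallyEq_of_contDiffAt {f g : E → 𝕜 → F} {a : E} {y : 𝕜}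
    {l : Filter E} (hl : l ≤ 𝓝 a) (hfg : f =ᶠ[l] g)
    (hg : ContDiffAt 𝕜 1 (Function.uncurry g) (a, y)) :
    Tendsto (fun x => deriv (f x) y) l (𝓝 (deriv (g a) y)) :=
  ((continuousAt_deriv_of_contDiffAt_uncurry hg).tendsto.mono_left hl).congr'
    (hfg.fun_comp (deriv · y)).symm

end PartialDeriv

theorem confluence_A7_to_C3_general (A0 A1 A2 A3 : ℂ)
    (T X Y Z W : ℂ) (hT : T ≠ 0) :
    Tendsto (fun ε : ℂ => deriv (fun u => Heps A0 A1 A2 A3 ε T X u Z W) Y)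
      (𝓝[≠] 0) (𝓝 (deriv (fun u => HC3 A0 A1 A2 A3 T X u Z W) Y)) ∧
    Tendsto (fun ε : ℂ => deriv (fun u => Heps A0 A1 A2 A3 ε T u Y Z W) X)
      (𝓝[≠] 0) (𝓝 (deriv (fun u => HC3 A0 A1 A2 A3 T u Y Z W) X)) ∧
    Tendsto (fun ε : ℂ => deriv (fun u => Heps A0 A1 A2 A3 ε T X Y Z u) W)
      (𝓝[≠] 0) (𝓝 (deriv (fun u => HC3 A0 A1 A2 A3 T X Y Z u) W)) ∧
    Tendsto (fun ε : ℂ => deriv (fun u => Heps A0 A1 A2 A3 ε T X Y u W) Z)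
      (𝓝[≠] 0) (𝓝 (deriv (fun u => HC3 A0 A1 A2 A3 T X Y u W) Z)) := by
  have hext : ∀ᶠ ε in 𝓝[≠] (0 : ℂ), Heps A0 A1 A2 A3 ε = HepsExt A0 A1 A2 A3 ε :=
    eventually_nhdsWithin_of_forall fun ε hε => Heps_eq_HepsExt hε
  have hT0 : T * (T - 0) ≠ 0 := by simpa using hT
  rw [HC3_eq_HepsExt_zero]
  refine ⟨?_, ?_, ?_, ?_⟩
  · exact tendsto_deriv_of_eventuallyEq_of_contDiffAt
      (g := fun ε u => HepsExt A0 A1 A2 A3 ε T X u Z W) nhdsWithin_le_nhds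
      (hext.mono fun ε h => by simp only [h]) (by unfold HepsExt; fun_prop (disch := exact hT0))
  · exact tendsto_deriv_of_eventuallyEq_of_contDiffAt
      (g := fun ε u => HepsExt A0 A1 A2 A3 ε T u Y Z W) nhdsWithin_le_nhds
      (hext.mono fun ε h => by simp only [h]) (by unfold HepsExt; fun_prop (disch := exact hT0))
  · exact tendsto_deriv_of_eventuallyEq_of_contDiffAt
      (g := fun ε u => HepsExt A0 A1 A2 A3 ε T X Y Z u) nhdsWithin_le_nhds
      (hext.mono fun ε h => by simp only [h]) (by unfold HepsExt; fun_prop (disch := exact hT0))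
  · exact tendsto_deriv_of_eventuallyEq_of_contDiffAt
      (g := fun ε u => HepsExt A0 A1 A2 A3 ε T X Y u W) nhdsWithin_le_nhds
      (hext.mono fun ε h => by simp only [h]) (by unfold HepsExt; fun_prop (disch := exact hT0))

theorem confluence_A7_to_C3 (A0 A1 A2 A3 : ℂ)
    (hrel : A0 + 2*A1 + 2*A2 + A3 = 1)
    (T X Y Z W : ℂ) (hT : T ≠ 0) :
    Tendsto (fun ε : ℂ => deriv (fun u => Heps A0 A1 A2 A3 ε T X u Z W) Y)
      (𝓝[≠] 0) (𝓝 (deriv (fun u => HC3 A0 A1 A2 A3 T X u Z W) Y)) ∧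
    Tendsto (fun ε : ℂ => deriv (fun u => Heps A0 A1 A2 A3 ε T u Y Z W) X)
      (𝓝[≠] 0) (𝓝 (deriv (fun u => HC3 A0 A1 A2 A3 T u Y Z W) X)) ∧
    Tendsto (fun ε : ℂ => deriv (fun u => Heps A0 A1 A2 A3 ε T X Y Z u) W)
      (𝓝[≠] 0) (𝓝 (deriv (fun u => HC3 A0 A1 A2 A3 T X Y Z u) W)) ∧
    Tendsto (fun ε : ℂ => deriv (fun u => Heps A0 A1 A2 A3 ε T X Y u W) Z)
      (𝓝[≠] 0) (𝓝 (deriv (fun u => HC3 A0 A1 A2 A3 T X Y u W) Z)) :=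
  confluence_A7_to_C3_general A0 A1 A2 A3 T X Y Z W hT
end
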